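/- Let E be a finite-dimensional real inner product space, m ≥ 1, and let H be the space of m-tuples of elements of E with inner product ⟨h, h'⟩ = Σ_{i=1}^m ⟨h_i, h'_i⟩. Let F ⊆ H be a linear subspace with orthogonal projection Π onto F, and let ε ∈ [0,1] be a constant of ellipticity, i.e. ‖Π(ξ ⊗ v)‖² ≥ ε · ‖ξ‖² · ‖v‖² for all ξ ∈ ℝᵐ and v ∈ E. Let φ : ℝᵐ → E be differentiable at a point x with φ(x) ≠ 0, with Dφ(x) := (∂φ/∂x₁(x), …, ∂φ/∂x_m(x)) ∈ H satisfying Π(Dφ(x)) = 0. Then the function y ↦ ‖φ(y)‖ is differentiable at x and satisfies the refined Kato inequality ‖d‖φ‖(x)‖ ≤ √(1−ε) · ‖Dφ(x)‖_H, where ‖d‖φ‖(x)‖ is the operator norm of the Fréchet derivative at x of y ↦ ‖φ(y)‖. -/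

import Mathlib

/-!
With `u = φ x / ‖φ x‖`, the derivative of `‖φ‖` at `x` is `ξ ↦ ⟪u, Dφ(x) ξ⟫ = ⟪ξ ⊗ u, Dφ(x)⟫_H`.
As `Dφ(x) ⊥ F`, only the component `(1 - Π)(ξ ⊗ u)` contributes, and by Pythagoras and
ellipticity `‖(1 - Π)(ξ ⊗ u)‖² ≤ (1 - ε) ‖ξ‖² ‖u‖²`; Cauchy–Schwarz concludes.
-/

open scoped RealInnerProductSpace

theorem HasFDerivAt.norm {G F : Type*} [NormedAddCommGroup G] [NormedSpace ℝ G]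
    [NormedAddCommGroup F] [InnerProductSpace ℝ F] {f : G → F} {f' : G →L[ℝ] F} {x : G}
    (hf : HasFDerivAt f f' x) (h0 : f x ≠ 0) :
    HasFDerivAt (fun y => ‖f y‖) (‖f x‖⁻¹ • (innerSL ℝ (f x)).comp f') x := by
  have hsqrt := (Real.hasDerivAt_sqrt (by positivity : ‖f x‖ ^ 2 ≠ 0)).comp_hasFDerivAt x
    hf.norm_sq
  simp only [Function.comp_def, Real.sqrt_sq (norm_nonneg _)] at hsqrt
  refine hsqrt.congr_fderiv ?_
  ext y
  simp only [smul_apply, ContinuousLinearMap.comp_apply, coe_innerSL_apply,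
    smul_eq_mul, nsmul_eq_mul, Nat.cast_ofNat, one_div, mul_inv_rev]
  ring

theorem abs_inner_le_sqrt_mul_of_mem_orthogonal {H : Type*} [NormedAddCommGroup H]
    [InnerProductSpace ℝ H] (K : Submodule ℝ H) [K.HasOrthogonalProjection] {ε : ℝ} {w D : H}
    (hw : ε * ‖w‖ ^ 2 ≤ ‖K.starProjection w‖ ^ 2) (hD : D ∈ Kᗮ) :
    |⟪w, D⟫| ≤ √(1 - ε) * ‖D‖ * ‖w‖ := by
  have hinner : ⟪w, D⟫ = ⟪Kᗮ.starProjection w, D⟫ := by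
    rw [Submodule.inner_starProjection_left_eq_right, Submodule.starProjection_eq_self_iff.mpr hD]
  have hnorm : ‖Kᗮ.starProjection w‖ ≤ √(1 - ε) * ‖w‖ := by
    rw [← Real.sqrt_sq (norm_nonneg w), ← Real.sqrt_mul' _ (sq_nonneg _)]
    apply Real.le_sqrt_of_sq_le
    linarith [K.norm_sq_eq_add_norm_sq_starProjection w]
  calc |⟪w, D⟫| ≤ ‖Kᗮ.starProjection w‖ * ‖D‖ := hinner ▸ abs_real_inner_le_norm _ _
    _ ≤ √(1 - ε) * ‖w‖ * ‖D‖ := by gcongr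
    _ = √(1 - ε) * ‖D‖ * ‖w‖ := by ring

section Tuples

variable {ι E : Type*} [Fintype ι] [NormedAddCommGroup E] [InnerProductSpace ℝ E]

def tensorTuple (ξ : EuclideanSpace ℝ ι) (v : E) : PiLp 2 fun _ : ι => E :=
  (WithLp.equiv 2 (∀ _ : ι, E)).symm fun i => ξ i • v

theorem norm_tensorTuple (ξ : EuclideanSpace ℝ ι) (v : E) :
    ‖tensorTuple ξ v‖ = ‖ξ‖ * ‖v‖ := by
  rw [← sq_eq_sq₀ (norm_nonneg _) (by positivity), mul_pow, PiLp.norm_sq_eq_of_L2,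
    EuclideanSpace.norm_sq_eq, Finset.sum_mul]
  simp [tensorTuple, norm_smul, mul_pow]

theorem inner_tensorTuple (ξ : EuclideanSpace ℝ ι) (v : E) (D : PiLp 2 fun _ : ι => E) :
    ⟪tensorTuple ξ v, D⟫ = ⟪v, ∑ i, ξ i • D i⟫ := by
  simp [tensorTuple, PiLp.inner_apply, inner_sum, real_inner_smul_left, real_inner_smul_right]

theorem ContinuousLinearMap.apply_eq_sum_smul_single [DecidableEq ι]
    (f : EuclideanSpace ℝ ι →L[ℝ] E) (ξ : EuclideanSpace ℝ ι) :
    f ξ = ∑ i, ξ i • f (EuclideanSpace.single i 1) := by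
  conv_lhs => rw [← (EuclideanSpace.basisFun ι ℝ).sum_repr ξ]
  simp [map_sum]

theorem inner_tensorTuple_toLp_apply_single [DecidableEq ι] (f : EuclideanSpace ℝ ι →L[ℝ] E)
    (ξ : EuclideanSpace ℝ ι) (v : E) :
    ⟪tensorTuple ξ v, WithLp.toLp 2 fun i => f (EuclideanSpace.single i 1)⟫ = ⟪v, f ξ⟫ := by
  rw [inner_tensorTuple, f.apply_eq_sum_smul_single]

end Tuples

theorem ContinuousLinearMap.norm_inv_norm_smul_innerSL_comp_le {G F : Type*}
    [NormedAddCommGroup G] [NormedSpace ℝ G] [NormedAddCommGroup F] [InnerProductSpace ℝ F]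
    {u : F} (hu : u ≠ 0) (f : G →L[ℝ] F) {C : ℝ} (hC : 0 ≤ C)
    (hf : ∀ ξ, |⟪u, f ξ⟫| ≤ C * (‖ξ‖ * ‖u‖)) :
    ‖‖u‖⁻¹ • (innerSL ℝ u).comp f‖ ≤ C := by
  refine opNorm_le_bound _ hC fun ξ => ?_
  calc ‖(‖u‖⁻¹ • (innerSL ℝ u).comp f) ξ‖ = ‖u‖⁻¹ * |⟪u, f ξ⟫| := by simp
    _ ≤ ‖u‖⁻¹ * (C * (‖ξ‖ * ‖u‖)) := by gcongr; exact hf ξ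
    _ = C * ‖ξ‖ := by field_simp

theorem stmt6_general {E : Type*} [NormedAddCommGroup E] [InnerProductSpace ℝ E]
    [FiniteDimensional ℝ E] (m : ℕ)
    (F : Submodule ℝ (PiLp 2 fun _ : Fin m => E)) (ε : ℝ)
    (hell : ∀ (ξ : EuclideanSpace ℝ (Fin m)) (v : E),
      ε * ‖ξ‖ ^ 2 * ‖v‖ ^ 2 ≤
        ‖(F.orthogonalProjection
            ((WithLp.equiv 2 (∀ _ : Fin m, E)).symm (fun i => ξ i • v)) :
          PiLp 2 fun _ : Fin m => E)‖ ^ 2)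
    (φ : EuclideanSpace ℝ (Fin m) → E) (x : EuclideanSpace ℝ (Fin m))
    (hφ : DifferentiableAt ℝ φ x) (hx : φ x ≠ 0)
    (D : PiLp 2 fun _ : Fin m => E)
    (hD : D = (WithLp.equiv 2 (∀ _ : Fin m, E)).symm
      (fun i => fderiv ℝ φ x (EuclideanSpace.single i 1)))
    (hker : F.orthogonalProjection D = 0) :
    DifferentiableAt ℝ (fun y => ‖φ y‖) x ∧
      ‖fderiv ℝ (fun y => ‖φ y‖) x‖ ≤ Real.sqrt (1 - ε) * ‖D‖ := by
  have hnorm := hφ.hasFDerivAt.norm hx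
  refine ⟨hnorm.differentiableAt, ?_⟩
  rw [hnorm.fderiv]
  have hDF : D ∈ Fᗮ := Submodule.orthogonalProjectionOnto_eq_zero_iff.mp hker
  refine ContinuousLinearMap.norm_inv_norm_smul_innerSL_comp_le hx _ (by positivity) fun ξ => ?_
  have hξ : ε * ‖tensorTuple ξ (φ x)‖ ^ 2 ≤ ‖F.starProjection (tensorTuple ξ (φ x))‖ ^ 2 := by
    rw [norm_tensorTuple, mul_pow, ← mul_assoc]
    exact hell ξ (φ x)
  have key := abs_inner_le_sqrt_mul_of_mem_orthogonal F hξ hDF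
  rw [WithLp.equiv_symm_apply] at hD
  subst hD
  rwa [norm_tensorTuple, inner_tensorTuple_toLp_apply_single] at key

/-- Refined Kato inequality: if `ε ∈ [0,1]` is a constant of ellipticity
for the orthogonal projection `Π` onto `F ⊆ H` (`‖Π(ξ ⊗ v)‖² ≥ ε‖ξ‖²‖v‖²`), `φ : ℝᵐ → E`
is differentiable at `x`, `φ x ≠ 0`, and the tuple `Dφ(x)` of partial derivatives
satisfies `Π(Dφ(x)) = 0`, then `y ↦ ‖φ y‖` is differentiable at `x` and
`‖d‖φ‖(x)‖ ≤ √(1−ε) · ‖Dφ(x)‖`. -/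
theorem stmt6 {E : Type*} [NormedAddCommGroup E] [InnerProductSpace ℝ E]
    [FiniteDimensional ℝ E] (m : ℕ) (hm : 1 ≤ m)
    (F : Submodule ℝ (PiLp 2 fun _ : Fin m => E)) (ε : ℝ) (hε : ε ∈ Set.Icc (0 : ℝ) 1)
    (hell : ∀ (ξ : EuclideanSpace ℝ (Fin m)) (v : E),
      ε * ‖ξ‖ ^ 2 * ‖v‖ ^ 2 ≤
        ‖(F.orthogonalProjection
            ((WithLp.equiv 2 (∀ _ : Fin m, E)).symm (fun i => ξ i • v)) :
          PiLp 2 fun _ : Fin m => E)‖ ^ 2)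
    (φ : EuclideanSpace ℝ (Fin m) → E) (x : EuclideanSpace ℝ (Fin m))
    (hφ : DifferentiableAt ℝ φ x) (hx : φ x ≠ 0)
    (D : PiLp 2 fun _ : Fin m => E)
    (hD : D = (WithLp.equiv 2 (∀ _ : Fin m, E)).symm
      (fun i => fderiv ℝ φ x (EuclideanSpace.single i 1)))
    (hker : F.orthogonalProjection D = 0) :
    DifferentiableAt ℝ (fun y => ‖φ y‖) x ∧
      ‖fderiv ℝ (fun y => ‖φ y‖) x‖ ≤ Real.sqrt (1 - ε) * ‖D‖ :=
  stmt6_general m F ε hell φ x hφ hx D hD hker
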